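/- arXiv:1711.00978 — 3 statements merged into one kernel-verified Lean document; each statement's English description precedes it below -/
import Mathlib

section
/- For every t ≥ 0, every φ ∈ C_b, and all x₁, x₂ ∈ ℝ, one has |T₂(t)φ(x₁) − T₂(t)φ(x₂)| ≤ b·g(x₁ − x₂), where T₂(t)φ(x) = e^{−t} Σ_{k=1}^∞ (t^k/k!) a_k(φ)(x) and g(x) = ∫_ℝ |J(x+z) − J(z)| dz. -/
open MeasureTheory Real Set

/-- Iterated convolutions: `a_0(φ) = φ`, `a_k(φ)(x) = ∫ J(x−y) a_{k−1}(φ)(y) dy`. -/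
noncomputable def ak (J : ℝ → ℝ) : ℕ → (ℝ → ℝ) → ℝ → ℝ
  | 0, φ => φ
  | k + 1, φ => fun x => ∫ y, J (x - y) * ak J k φ y

/-- `T₂(t)φ(x) = e^{−t} Σ_{k=1}^∞ (t^k/k!) a_k(φ)(x)` (indexed by `k+1` for `k : ℕ`). -/
noncomputable def T2map (J : ℝ → ℝ) (t : ℝ) (φ : ℝ → ℝ) (x : ℝ) : ℝ :=
  Real.exp (-t) * ∑' k : ℕ, t ^ (k + 1) / (Nat.factorial (k + 1)) * ak J (k + 1) φ x

/-- `g(x) = ∫ |J(x+z) − J(z)| dz`. -/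
noncomputable def gJ (J : ℝ → ℝ) (x : ℝ) : ℝ := ∫ z, |J (x + z) - J z|

/-!
Each `a_{k+1}(φ)` is `J` convolved with a function taking values in `[0, b]`, so
`a_{k+1}(φ)(x₁) - a_{k+1}(φ)(x₂) = ∫ (J(x₁ - y) - J(x₂ - y)) a_k(φ)(y) dy` is at most `b · g(x₁ - x₂)`
in absolute value. `T₂(t)φ` averages these with the weights `e^{-t} t^k / k!`, `k ≥ 1`, whose total
mass `1 - e^{-t}` is at most `1`.
-/

open scoped Convolution

section Kernel

variable {J f : ℝ → ℝ} {b : ℝ}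

lemma integrable_comp_sub_left_mul (hJ : Integrable J) (hf : AEStronglyMeasurable f)
    (hfb : ∀ y, |f y| ≤ b) (x : ℝ) : Integrable fun y => J (x - y) * f y :=
  (hJ.comp_sub_left x).mul_bdd hf (.of_forall hfb)

lemma integral_comp_sub_left_mul_eq_convolution (J f : ℝ → ℝ) (x : ℝ) :
    ∫ y, J (x - y) * f y = (J ⋆[ContinuousLinearMap.mul ℝ ℝ] f) x := by
  rw [convolution_eq_swap]
  rfl

lemma continuous_integral_comp_sub_left_mul (hJ : Integrable J) (hf : Continuous f)
    (hfb : ∀ y, |f y| ≤ b) : Continuous fun x => ∫ y, J (x - y) * f y := by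
  simp only [integral_comp_sub_left_mul_eq_convolution]
  refine BddAbove.continuous_convolution_right_of_integrable _ ⟨b, ?_⟩ hJ hf
  rintro _ ⟨y, rfl⟩
  exact hfb y

lemma integral_comp_sub_left_mul_mem_Icc (hJ0 : ∀ y, 0 ≤ J y) (hJ : Integrable J)
    (hJ1 : ∫ y, J y = 1) (hf : AEStronglyMeasurable f) (hfb : ∀ y, f y ∈ Icc 0 b) (x : ℝ) :
    ∫ y, J (x - y) * f y ∈ Icc 0 b := by
  have hfb' : ∀ y, |f y| ≤ b := fun y => (abs_of_nonneg (hfb y).1).trans_le (hfb y).2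
  refine ⟨integral_nonneg fun y => mul_nonneg (hJ0 _) (hfb y).1, ?_⟩
  calc ∫ y, J (x - y) * f y
      ≤ ∫ y, J (x - y) * b :=
        integral_mono (integrable_comp_sub_left_mul hJ hf hfb' x)
          ((hJ.comp_sub_left x).mul_const b)
          fun y => mul_le_mul_of_nonneg_left (hfb y).2 (hJ0 _)
    _ = b := by rw [integral_mul_const, integral_sub_left_eq_self J volume x, hJ1, one_mul]

lemma integral_abs_comp_sub_left_sub (J : ℝ → ℝ) (x₁ x₂ : ℝ) :
    ∫ y, |J (x₁ - y) - J (x₂ - y)| = gJ J (x₁ - x₂) := by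
  rw [gJ, ← integral_sub_left_eq_self (fun z => |J (x₁ - x₂ + z) - J z|) volume x₂]
  simp only [sub_add_sub_cancel]

lemma abs_integral_comp_sub_left_mul_sub_le (hJ : Integrable J) (hf : AEStronglyMeasurable f)
    (hfb : ∀ y, |f y| ≤ b) (x₁ x₂ : ℝ) :
    |(∫ y, J (x₁ - y) * f y) - ∫ y, J (x₂ - y) * f y| ≤ b * gJ J (x₁ - x₂) := by
  rw [← integral_sub (integrable_comp_sub_left_mul hJ hf hfb x₁)
    (integrable_comp_sub_left_mul hJ hf hfb x₂), ← integral_abs_comp_sub_left_sub,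
    ← integral_const_mul b, ← Real.norm_eq_abs]
  refine norm_integral_le_of_norm_le
    (((hJ.comp_sub_left x₁).sub (hJ.comp_sub_left x₂)).abs.const_mul b) (.of_forall fun y => ?_)
  rw [Real.norm_eq_abs, ← sub_mul, abs_mul, mul_comm]
  exact mul_le_mul_of_nonneg_right (hfb y) (abs_nonneg _)

end Kernel

lemma ak_continuous_and_mem_Icc {J φ : ℝ → ℝ} {b : ℝ} (hJ0 : ∀ y, 0 ≤ J y) (hJ : Integrable J)
    (hJ1 : ∫ y, J y = 1) (hφc : Continuous φ) (hφ : ∀ x, φ x ∈ Icc 0 b) (k : ℕ) :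
    Continuous (ak J k φ) ∧ ∀ x, ak J k φ x ∈ Icc 0 b := by
  induction k with
  | zero => exact ⟨hφc, hφ⟩
  | succ k ih =>
    obtain ⟨hc, hmem⟩ := ih
    exact ⟨continuous_integral_comp_sub_left_mul hJ hc
        fun y => (abs_of_nonneg (hmem y).1).trans_le (hmem y).2,
      integral_comp_sub_left_mul_mem_Icc hJ0 hJ hJ1 hc.aestronglyMeasurable hmem⟩

lemma hasSum_pow_succ_div_factorial_succ (t : ℝ) :
    HasSum (fun k : ℕ => t ^ (k + 1) / (Nat.factorial (k + 1))) (exp t - 1) := by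
  have h := (hasSum_nat_add_iff' 1).2 (exp_eq_exp_ℝ ▸ NormedSpace.expSeries_div_hasSum_exp t)
  simpa using h

lemma abs_tsum_mul_sub_tsum_mul_le {c u v : ℕ → ℝ} {C M : ℝ} (hc : HasSum c C)
    (hc0 : ∀ k, 0 ≤ c k) (hu : Summable fun k => c k * u k) (hv : Summable fun k => c k * v k)
    (huv : ∀ k, |u k - v k| ≤ M) :
    |(∑' k, c k * u k) - ∑' k, c k * v k| ≤ C * M :=
  (hu.hasSum.sub hv.hasSum).norm_le_of_bounded (hc.mul_right M) fun k => by
    rw [Real.norm_eq_abs, ← mul_sub, abs_mul, abs_of_nonneg (hc0 k)]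
    exact mul_le_mul_of_nonneg_left (huv k) (hc0 k)

theorem stmt_6_general (J : ℝ → ℝ) (hJ0 : ∀ y, 0 ≤ J y) (hJi : Integrable J)
    (hJ1 : ∫ y, J y = 1) (b : ℝ)
    (φ : ℝ → ℝ) (hφc : Continuous φ) (hφ : ∀ x, φ x ∈ Set.Icc 0 b)
    (t : ℝ) (ht : 0 ≤ t) (x₁ x₂ : ℝ) :
    |T2map J t φ x₁ - T2map J t φ x₂| ≤ b * gJ J (x₁ - x₂) := by
  have hak := ak_continuous_and_mem_Icc hJ0 hJi hJ1 hφc hφ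
  have hc := hasSum_pow_succ_div_factorial_succ t
  have hc0 : ∀ k : ℕ, 0 ≤ t ^ (k + 1) / (Nat.factorial (k + 1) : ℝ) := fun k => by positivity
  have habs (k : ℕ) (x : ℝ) : |ak J k φ x| ≤ b :=
    (abs_of_nonneg ((hak k).2 x).1).trans_le ((hak k).2 x).2
  have hsum (x : ℝ) : Summable fun k => t ^ (k + 1) / (Nat.factorial (k + 1)) * ak J (k + 1) φ x :=
    (hc.summable.mul_right b).of_norm_bounded fun k => by
      rw [norm_mul, Real.norm_of_nonneg (hc0 k)]
      exact mul_le_mul_of_nonneg_left (habs _ x) (hc0 k)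
  have hstep (k : ℕ) : |ak J (k + 1) φ x₁ - ak J (k + 1) φ x₂| ≤ b * gJ J (x₁ - x₂) :=
    abs_integral_comp_sub_left_mul_sub_le hJi (hak k).1.aestronglyMeasurable (habs k) x₁ x₂
  have hM : 0 ≤ b * gJ J (x₁ - x₂) := (abs_nonneg _).trans (hstep 0)
  have hweight : exp (-t) * (exp t - 1) ≤ 1 := by
    rw [mul_sub, mul_one, ← exp_add, neg_add_cancel, exp_zero]
    linarith [exp_pos (-t)]
  rw [T2map, T2map, ← mul_sub, abs_mul, abs_of_pos (exp_pos _)]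
  calc exp (-t) * |_|
      ≤ exp (-t) * ((exp t - 1) * (b * gJ J (x₁ - x₂))) := by
        gcongr
        exact abs_tsum_mul_sub_tsum_mul_le hc hc0 (hsum x₁) (hsum x₂) hstep
    _ = (exp (-t) * (exp t - 1)) * (b * gJ J (x₁ - x₂)) := by ring
    _ ≤ b * gJ J (x₁ - x₂) := mul_le_of_le_one_left hM hweight

/-- for every `t ≥ 0`, `φ ∈ C_b` and `x₁, x₂ ∈ ℝ`,
`|T₂(t)φ(x₁) − T₂(t)φ(x₂)| ≤ b·g(x₁ − x₂)`. -/
theorem stmt_6 (J : ℝ → ℝ) (hJ0 : ∀ y, 0 ≤ J y) (hJi : Integrable J)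
    (hJ1 : ∫ y, J y = 1) (b : ℝ) (hb : 0 < b)
    (φ : ℝ → ℝ) (hφc : Continuous φ) (hφ : ∀ x, φ x ∈ Set.Icc 0 b)
    (t : ℝ) (ht : 0 ≤ t) (x₁ x₂ : ℝ) :
    |T2map J t φ x₁ - T2map J t φ x₂| ≤ b * gJ J (x₁ - x₂) :=
  stmt_6_general J hJ0 hJi hJ1 b φ hφc hφ t ht x₁ x₂
end

section
/- (Lemma 1) For each t > 0 and every subset U of C_b, one has α(T(t)U) ≤ e^{−t} α(U), where α denotes the Kuratowski measure of noncompactness in the metric space (C_b, d); that is, the solution map T(t) of the linear equation u_t = J∗u − u is an α-contraction with contraction coefficient e^{−t}. -/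
open MeasureTheory Real Set
open scoped ENNReal

/-- The linear solution map `T(t)φ(x) = e^{−t} Σ_{k=0}^∞ (t^k/k!) a_k(φ)(x)`. -/
noncomputable def Tmap (J : ℝ → ℝ) (t : ℝ) (φ : ℝ → ℝ) (x : ℝ) : ℝ :=
  Real.exp (-t) * ∑' k : ℕ, t ^ k / (Nat.factorial k) * ak J k φ x

/-- The metric `d(φ,ψ) = Σ_{k=1}^∞ 2^{-k} max_{-k ≤ x ≤ k} |φ(x) − ψ(x)|`
(indexed here by `k+1` for `k : ℕ`). -/
noncomputable def dCb (φ ψ : ℝ → ℝ) : ℝ :=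
  ∑' k : ℕ, (1 / 2 : ℝ) ^ (k + 1) *
    (⨆ x : Set.Icc (-((k : ℝ) + 1)) ((k : ℝ) + 1), |φ ↑x - ψ ↑x|)

/-- The Kuratowski measure of noncompactness of a set `A` relative to a distance
function `d`: the infimum (in `ℝ≥0∞`, so `∞` if no such cover exists) of all `ε`
such that `A` admits a finite cover by sets of `d`-diameter at most `ε`. -/
noncomputable def kuratD {X : Type*} (d : X → X → ℝ) (A : Set X) : ℝ≥0∞ :=
  sInf {ε : ℝ≥0∞ | ∃ (n : ℕ) (C : Fin n → Set X), A ⊆ ⋃ i, C i ∧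
    ∀ i, ∀ x ∈ C i, ∀ y ∈ C i, ENNReal.ofReal (d x y) ≤ ε}

open Filter Topology Metric

/-! Write `T(t)φ = e^{-t} φ + G(t)φ`, where `G(t)φ = e^{-t} Σ_{k ≥ 1} t^k/k! a_k(φ)` (`convPart`)
collects the convolution terms; then `d(T(t)φ, T(t)ψ) ≤ e^{-t} d(φ, ψ) + d(G(t)φ, G(t)ψ)`, so
`α(T(t)U) ≤ e^{-t} α(U) + α(G(t)U)`. Each `a_k(φ)` with `k ≥ 1` is the convolution of `J` with a
function bounded by `b`, hence has the modulus of continuity `b ‖J(· + s) - J‖_{L¹}`, which tends to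
`0` with `s`. So `G(t)U` is bounded and uniformly equicontinuous, hence totally bounded for `d`
(Arzelà–Ascoli), i.e. `α(G(t)U) = 0`. -/

noncomputable def translationModulus (J : ℝ → ℝ) (s : ℝ) : ℝ := ∫ y, |J (y + s) - J y|

section TranslationModulus

variable {J : ℝ → ℝ}

lemma translationModulus_nonneg (J : ℝ → ℝ) (s : ℝ) : 0 ≤ translationModulus J s :=
  integral_nonneg fun _ => abs_nonneg _

lemma translationModulus_neg (J : ℝ → ℝ) (s : ℝ) :
    translationModulus J (-s) = translationModulus J s := by
  rw [translationModulus, translationModulus, ← integral_add_right_eq_self _ s]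
  simp only [add_neg_cancel_right]
  exact integral_congr_ae (ae_of_all _ fun y => abs_sub_comm _ _)

lemma translationModulus_abs (J : ℝ → ℝ) (s : ℝ) :
    translationModulus J |s| = translationModulus J s := by
  rcases abs_choice s with h | h <;> simp only [h, translationModulus_neg]

lemma HasCompactSupport.tendsto_translationModulus (hJ : HasCompactSupport J)
    (hJc : Continuous J) : Tendsto (translationModulus J) (𝓝 0) (𝓝 0) := by
  set K := cthickening 1 (tsupport J)
  have hcont : Continuous fun s => ∫ y in K, |J (y + s) - J y| :=
    continuous_parametric_integral_of_continuous (by fun_prop) hJ.cthickening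
  have heq : (fun s => ∫ y in K, |J (y + s) - J y|) =ᶠ[𝓝 0] translationModulus J := by
    filter_upwards [closedBall_mem_nhds (0 : ℝ) one_pos] with s hs
    refine setIntegral_eq_integral_of_forall_compl_eq_zero fun y hy => ?_
    have hy₀ : y ∉ tsupport J := fun h => hy (self_subset_cthickening _ h)
    have hys : y + s ∉ tsupport J := fun h =>
      hy (mem_cthickening_of_dist_le y (y + s) 1 _ h (by simpa [Real.dist_eq] using hs))
    simp [image_eq_zero_of_notMem_tsupport hy₀, image_eq_zero_of_notMem_tsupport hys]
  simpa [translationModulus] using (hcont.tendsto 0).congr' heq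

lemma translationModulus_le_add (hJ : Integrable J) {g : ℝ → ℝ} (hg : Integrable g)
    (s : ℝ) :
    translationModulus J s ≤ translationModulus g s + 2 * ∫ y, |J y - g y| := by
  have i₁ : Integrable fun y => |J (y + s) - g (y + s)| :=
    ((hJ.comp_add_right s).sub (hg.comp_add_right s)).abs
  have i₂ : Integrable fun y => |g (y + s) - g y| := ((hg.comp_add_right s).sub hg).abs
  have i₃ : Integrable fun y => |J y - g y| := (hJ.sub hg).abs
  have i₁₂ : Integrable fun y => |J (y + s) - g (y + s)| + |g (y + s) - g y| := i₁.add i₂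
  have hpt : ∀ y, |J (y + s) - J y| ≤
      |J (y + s) - g (y + s)| + |g (y + s) - g y| + |J y - g y| := fun y => by
    linarith [abs_sub_le (J (y + s)) (g (y + s)) (J y), abs_sub_le (g (y + s)) (g y) (J y),
      abs_sub_comm (g y) (J y)]
  calc translationModulus J s
      ≤ ∫ y, (|J (y + s) - g (y + s)| + |g (y + s) - g y| + |J y - g y|) :=
        integral_mono ((hJ.comp_add_right s).sub hJ).abs (i₁₂.add i₃) hpt
    _ = translationModulus g s + 2 * ∫ y, |J y - g y| := by
        rw [integral_add i₁₂ i₃, integral_add i₁ i₂,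
          integral_add_right_eq_self (fun y => |J y - g y|) s, translationModulus]
        ring

lemma MeasureTheory.Integrable.tendsto_translationModulus (hJ : Integrable J) :
    Tendsto (translationModulus J) (𝓝 0) (𝓝 0) := by
  rw [Metric.tendsto_nhds]
  intro ε hε
  obtain ⟨g, hgc, hJg, hgcont, hgi⟩ :=
    hJ.exists_hasCompactSupport_integral_sub_le (show 0 < ε / 4 by positivity)
  filter_upwards [(hgc.tendsto_translationModulus hgcont).eventually
    (gt_mem_nhds (show (0 : ℝ) < ε / 4 by positivity))] with s hs
  rw [Real.dist_eq, sub_zero, abs_of_nonneg (translationModulus_nonneg J s)]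
  simp only [Real.norm_eq_abs] at hJg
  linarith [translationModulus_le_add hJ hgi s]

lemma uniformEquicontinuous_of_translationModulus {ι : Type*} (hJ : Integrable J)
    {F : ι → ℝ → ℝ} (B : ℝ)
    (hF : ∀ i x x', |F i x - F i x'| ≤ B * translationModulus J (x - x')) :
    UniformEquicontinuous F := by
  refine Metric.uniformEquicontinuous_of_continuity_modulus
    (fun r => B * translationModulus J r) ?_ F fun x x' i => ?_
  · simpa using hJ.tendsto_translationModulus.const_mul B
  · simpa [Real.dist_eq, translationModulus_abs] using hF i x x'

end TranslationModulus

structure IsProbabilityDensity (J : ℝ → ℝ) : Prop where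
  nonneg : ∀ y, 0 ≤ J y
  integrable : Integrable J
  integral_eq_one : ∫ y, J y = 1

section Convolution

variable {J g : ℝ → ℝ} {b : ℝ}

lemma integrable_kernel_mul (hJ : Integrable J) (hg : AEStronglyMeasurable g)
    (hgb : ∀ y, |g y| ≤ b) (x : ℝ) : Integrable fun y => J (x - y) * g y :=
  (hJ.comp_sub_left x).mul_bdd hg (ae_of_all _ hgb)

lemma abs_integral_kernel_mul_le (hJ : IsProbabilityDensity J) (hg : AEStronglyMeasurable g)
    (hgb : ∀ y, |g y| ≤ b) (x : ℝ) :
    |∫ y, J (x - y) * g y| ≤ b :=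
  calc |∫ y, J (x - y) * g y| ≤ ∫ y, |J (x - y) * g y| := abs_integral_le_integral_abs
    _ ≤ ∫ y, J (x - y) * b := by
        refine integral_mono (integrable_kernel_mul hJ.integrable hg hgb x).abs
          ((hJ.integrable.comp_sub_left x).mul_const b) fun y => ?_
        rw [abs_mul, abs_of_nonneg (hJ.nonneg _)]
        exact mul_le_mul_of_nonneg_left (hgb y) (hJ.nonneg _)
    _ = b := by rw [integral_mul_const, integral_sub_left_eq_self, hJ.integral_eq_one, one_mul]

lemma abs_integral_kernel_mul_sub_le (hJ : Integrable J) (hg : AEStronglyMeasurable g)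
    (hgb : ∀ y, |g y| ≤ b) (x x' : ℝ) :
    |(∫ y, J (x - y) * g y) - ∫ y, J (x' - y) * g y| ≤ b * translationModulus J (x - x') := by
  rw [← integral_sub (integrable_kernel_mul hJ hg hgb x) (integrable_kernel_mul hJ hg hgb x')]
  calc |∫ y, (J (x - y) * g y - J (x' - y) * g y)|
      ≤ ∫ y, |J (x - y) - J (x' - y)| * b := by
        refine abs_integral_le_integral_abs.trans (integral_mono ?_ ?_ fun y => ?_)
        · exact ((integrable_kernel_mul hJ hg hgb x).sub (integrable_kernel_mul hJ hg hgb x')).abs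
        · exact ((hJ.comp_sub_left x).sub (hJ.comp_sub_left x')).abs.mul_const b
        · rw [← sub_mul, abs_mul]
          exact mul_le_mul_of_nonneg_left (hgb y) (abs_nonneg _)
    _ = b * translationModulus J (x - x') := by
        rw [integral_mul_const, mul_comm, translationModulus,
          ← integral_sub_left_eq_self _ volume x']
        ring_nf

lemma continuous_integral_kernel_mul (hJ : Integrable J) (hg : AEStronglyMeasurable g)
    (hgb : ∀ y, |g y| ≤ b) : Continuous fun x => ∫ y, J (x - y) * g y :=
  ((uniformEquicontinuous_of_translationModulus hJ b
    (F := fun (_ : Unit) x => ∫ y, J (x - y) * g y)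
    fun _ => abs_integral_kernel_mul_sub_le hJ hg hgb).uniformContinuous ()).continuous

end Convolution

lemma ak_succ_apply (J : ℝ → ℝ) (k : ℕ) (φ : ℝ → ℝ) (x : ℝ) :
    ak J (k + 1) φ x = ∫ y, J (x - y) * ak J k φ y := rfl

lemma continuous_ak_and_abs_le {J : ℝ → ℝ} (hJ : IsProbabilityDensity J) {b : ℝ} {φ : ℝ → ℝ}
    (hφ : Continuous φ) (hφb : ∀ x, |φ x| ≤ b) :
    ∀ k, Continuous (ak J k φ) ∧ ∀ x, |ak J k φ x| ≤ b
  | 0 => ⟨hφ, hφb⟩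
  | k + 1 =>
    have ih := continuous_ak_and_abs_le hJ hφ hφb k
    ⟨continuous_integral_kernel_mul hJ.integrable ih.1.aestronglyMeasurable ih.2,
      abs_integral_kernel_mul_le hJ ih.1.aestronglyMeasurable ih.2⟩

section ExpSeries

variable (t : ℝ) {u : ℕ → ℝ} {B : ℝ}

lemma hasSum_pow_succ_div_factorial :
    HasSum (fun k : ℕ => t ^ (k + 1) / ((k + 1).factorial : ℝ)) (Real.exp t - 1) := by
  simpa [Real.exp_eq_exp_ℝ] using
    (hasSum_nat_add_iff' 1).mpr (NormedSpace.expSeries_div_hasSum_exp t)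

lemma norm_pow_succ_div_factorial_mul_le (hu : ∀ k, |u k| ≤ B) (k : ℕ) :
    ‖t ^ (k + 1) / ((k + 1).factorial : ℝ) * u k‖ ≤
      |t| ^ (k + 1) / ((k + 1).factorial : ℝ) * B := by
  rw [Real.norm_eq_abs, abs_mul, abs_div, abs_pow, Nat.abs_cast]
  exact mul_le_mul_of_nonneg_left (hu k) (by positivity)

lemma summable_pow_succ_div_factorial_mul (hu : ∀ k, |u k| ≤ B) :
    Summable fun k : ℕ => t ^ (k + 1) / ((k + 1).factorial : ℝ) * u k :=
  ((hasSum_pow_succ_div_factorial |t|).summable.mul_right B).of_norm_bounded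
    (norm_pow_succ_div_factorial_mul_le t hu)

lemma abs_tsum_pow_succ_div_factorial_mul_le (hu : ∀ k, |u k| ≤ B) :
    |∑' k : ℕ, t ^ (k + 1) / ((k + 1).factorial : ℝ) * u k| ≤ (Real.exp |t| - 1) * B :=
  tsum_of_norm_bounded ((hasSum_pow_succ_div_factorial |t|).mul_right B)
    (norm_pow_succ_div_factorial_mul_le t hu)

end ExpSeries

noncomputable def convPart (J : ℝ → ℝ) (t : ℝ) (φ : ℝ → ℝ) (x : ℝ) : ℝ :=
  Real.exp (-t) * ∑' k : ℕ, t ^ (k + 1) / ((k + 1).factorial : ℝ) * ak J (k + 1) φ x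

section ConvPart

variable {J : ℝ → ℝ} {b : ℝ} {φ : ℝ → ℝ}

lemma Tmap_eq_add_convPart (hJ : IsProbabilityDensity J) (hφ : Continuous φ)
    (hφb : ∀ x, |φ x| ≤ b) (t x : ℝ) :
    Tmap J t φ x = Real.exp (-t) * φ x + convPart J t φ x := by
  have hak := continuous_ak_and_abs_le hJ hφ hφb
  rw [Tmap, tsum_eq_zero_add' (f := fun k => t ^ k / (k.factorial : ℝ) * ak J k φ x)
    (summable_pow_succ_div_factorial_mul t fun k => (hak (k + 1)).2 x)]
  simp [convPart, mul_add, ak]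

lemma abs_convPart_le (hJ : IsProbabilityDensity J) (hφ : Continuous φ)
    (hφb : ∀ x, |φ x| ≤ b) (t x : ℝ) :
    |convPart J t φ x| ≤ Real.exp (-t) * (Real.exp |t| - 1) * b := by
  have hak := continuous_ak_and_abs_le hJ hφ hφb
  rw [convPart, abs_mul, abs_of_pos (Real.exp_pos _), mul_assoc]
  exact mul_le_mul_of_nonneg_left
    (abs_tsum_pow_succ_div_factorial_mul_le t fun k => (hak (k + 1)).2 x) (Real.exp_pos _).le

lemma abs_convPart_sub_le (hJ : IsProbabilityDensity J) (hφ : Continuous φ)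
    (hφb : ∀ x, |φ x| ≤ b) (t x x' : ℝ) :
    |convPart J t φ x - convPart J t φ x'| ≤
      Real.exp (-t) * (Real.exp |t| - 1) * b * translationModulus J (x - x') := by
  have hak := continuous_ak_and_abs_le hJ hφ hφb
  have hsum := fun y => summable_pow_succ_div_factorial_mul t fun k => (hak (k + 1)).2 y
  rw [convPart, convPart, ← mul_sub, ← (hsum x).tsum_sub (hsum x'), abs_mul,
    abs_of_pos (Real.exp_pos _), mul_assoc, mul_assoc]
  simp_rw [← mul_sub, ak_succ_apply]
  exact mul_le_mul_of_nonneg_left (abs_tsum_pow_succ_div_factorial_mul_le t fun k =>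
    abs_integral_kernel_mul_sub_le hJ.integrable (hak k).1.aestronglyMeasurable (hak k).2 x x')
    (Real.exp_pos _).le

end ConvPart

noncomputable def supAbsSub (r : ℝ) (f g : ℝ → ℝ) : ℝ := ⨆ x : Icc (-r) r, |f x - g x|

section Distance

variable {f g : ℝ → ℝ} {r M : ℝ}

lemma dCb_eq_tsum (f g : ℝ → ℝ) :
    dCb f g = ∑' k : ℕ, (1 / 2 : ℝ) ^ (k + 1) * supAbsSub (k + 1) f g := rfl

lemma supAbsSub_nonneg (r : ℝ) (f g : ℝ → ℝ) : 0 ≤ supAbsSub r f g :=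
  Real.iSup_nonneg fun _ => abs_nonneg _

lemma supAbsSub_le (hM : 0 ≤ M) (h : ∀ x ∈ Icc (-r) r, |f x - g x| ≤ M) :
    supAbsSub r f g ≤ M :=
  Real.iSup_le (fun x => h x x.2) hM

lemma abs_sub_le_supAbsSub (hM : ∀ x, |f x - g x| ≤ M) {x : ℝ} (hx : x ∈ Icc (-r) r) :
    |f x - g x| ≤ supAbsSub r f g :=
  le_ciSup (f := fun x : Icc (-r) r => |f x - g x|)
    ⟨M, by rintro _ ⟨y, rfl⟩; exact hM y⟩ ⟨x, hx⟩

lemma summable_half_pow_succ : Summable fun k : ℕ => (1 / 2 : ℝ) ^ (k + 1) :=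
  (summable_nat_add_iff 1).mpr summable_geometric_two

lemma tsum_half_pow_succ : ∑' k : ℕ, (1 / 2 : ℝ) ^ (k + 1) = 1 := by
  simp_rw [pow_succ, tsum_mul_right, tsum_geometric_two]
  norm_num

lemma summable_dCb (hM : ∀ x, |f x - g x| ≤ M) :
    Summable fun k : ℕ => (1 / 2 : ℝ) ^ (k + 1) * supAbsSub (k + 1) f g := by
  have hM0 : 0 ≤ M := (abs_nonneg _).trans (hM 0)
  refine (summable_half_pow_succ.mul_right M).of_nonneg_of_le
    (fun k => mul_nonneg (by positivity) (supAbsSub_nonneg _ f g)) fun k => ?_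
  exact mul_le_mul_of_nonneg_left (supAbsSub_le hM0 fun x _ => hM x) (by positivity)

lemma dCb_le_mul_add {f' g' f'' g'' : ℝ → ℝ} {c M' M'' : ℝ} (hc : 0 ≤ c)
    (h' : ∀ x, |f' x - g' x| ≤ M') (h'' : ∀ x, |f'' x - g'' x| ≤ M'')
    (h : ∀ x, |f x - g x| ≤ c * |f' x - g' x| + |f'' x - g'' x|) :
    dCb f g ≤ c * dCb f' g' + dCb f'' g'' := by
  have hM : ∀ x, |f x - g x| ≤ c * M' + M'' := fun x =>
    (h x).trans (add_le_add (mul_le_mul_of_nonneg_left (h' x) hc) (h'' x))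
  have hsup (k : ℕ) : supAbsSub (k + 1) f g ≤
      c * supAbsSub (k + 1) f' g' + supAbsSub (k + 1) f'' g'' :=
    supAbsSub_le (add_nonneg (mul_nonneg hc (supAbsSub_nonneg _ _ _)) (supAbsSub_nonneg _ _ _))
      fun x hx => (h x).trans (add_le_add
        (mul_le_mul_of_nonneg_left (abs_sub_le_supAbsSub h' hx) hc) (abs_sub_le_supAbsSub h'' hx))
  have hsum' := (summable_dCb h').mul_left c
  rw [dCb_eq_tsum, dCb_eq_tsum, dCb_eq_tsum, ← tsum_mul_left,
    ← hsum'.tsum_add (summable_dCb h'')]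
  refine (summable_dCb hM).tsum_le_tsum (fun k => ?_) (hsum'.add (summable_dCb h''))
  calc (1 / 2 : ℝ) ^ (k + 1) * supAbsSub (k + 1) f g
      ≤ (1 / 2 : ℝ) ^ (k + 1) * (c * supAbsSub (k + 1) f' g' + supAbsSub (k + 1) f'' g'') :=
        mul_le_mul_of_nonneg_left (hsup k) (by positivity)
    _ = _ := by ring

lemma dCb_le_of_abs_sub_le_on_Icc (N : ℕ) {η : ℝ} (hη : 0 ≤ η)
    (hloc : ∀ x ∈ Icc (-(N : ℝ)) N, |f x - g x| ≤ η) (hM : ∀ x, |f x - g x| ≤ M) :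
    dCb f g ≤ η + (1 / 2) ^ N * M := by
  have hM0 : 0 ≤ M := (abs_nonneg _).trans (hM 0)
  rw [dCb_eq_tsum, ← (summable_dCb hM).sum_add_tsum_nat_add N]
  gcongr
  · calc ∑ k ∈ Finset.range N, (1 / 2 : ℝ) ^ (k + 1) * supAbsSub (k + 1) f g
        ≤ ∑ k ∈ Finset.range N, (1 / 2 : ℝ) ^ (k + 1) * η := by
          refine Finset.sum_le_sum fun k hk => mul_le_mul_of_nonneg_left
            (supAbsSub_le hη fun x hx => hloc x (Icc_subset_Icc ?_ ?_ hx)) (by positivity)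
          all_goals have : (k : ℝ) + 1 ≤ N := by exact_mod_cast Finset.mem_range.mp hk
          all_goals linarith
      _ ≤ ∑' k : ℕ, (1 / 2 : ℝ) ^ (k + 1) * η :=
          (summable_half_pow_succ.mul_right η).sum_le_tsum _ fun _ _ => by positivity
      _ = η := by rw [tsum_mul_right, tsum_half_pow_succ, one_mul]
  · calc ∑' k : ℕ, (1 / 2 : ℝ) ^ (k + N + 1) * supAbsSub ((k + N : ℕ) + 1) f g
        ≤ ∑' k : ℕ, (1 / 2 : ℝ) ^ N * ((1 / 2 : ℝ) ^ (k + 1) * M) := by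
          refine ((summable_nat_add_iff N).mpr (summable_dCb hM)).tsum_le_tsum (fun k => ?_)
            ((summable_half_pow_succ.mul_right M).mul_left _)
          rw [← mul_assoc, ← pow_add, show N + (k + 1) = k + N + 1 by ring]
          exact mul_le_mul_of_nonneg_left (supAbsSub_le hM0 fun x _ => hM x) (by positivity)
      _ = (1 / 2) ^ N * M := by rw [tsum_mul_left, tsum_mul_right, tsum_half_pow_succ, one_mul]

end Distance

section Kuratowski

variable {X Y Z : Type*}

lemma kuratD_le_of_cover {ι : Type*} [Finite ι] {d : X → X → ℝ} {A : Set X} {ε : ℝ≥0∞}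
    (C : ι → Set X) (hA : A ⊆ ⋃ i, C i)
    (hC : ∀ i, ∀ x ∈ C i, ∀ y ∈ C i, ENNReal.ofReal (d x y) ≤ ε) :
    kuratD d A ≤ ε := by
  obtain ⟨n, ⟨e⟩⟩ := Finite.exists_equiv_fin ι
  refine sInf_le ⟨n, C ∘ e.symm, fun x hx => ?_, fun i => hC _⟩
  obtain ⟨i, hi⟩ := mem_iUnion.mp (hA hx)
  exact mem_iUnion.mpr ⟨e i, by simpa using hi⟩

lemma kuratD_image_le_mul_add (dX : X → X → ℝ) (dY : Y → Y → ℝ) (dZ : Z → Z → ℝ)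
    {A : Set X} (f : X → Y) (g : X → Z) {c : ℝ} (hc : 0 ≤ c)
    (h : ∀ x ∈ A, ∀ y ∈ A, dY (f x) (f y) ≤ c * dX x y + dZ (g x) (g y)) :
    kuratD dY (f '' A) ≤ ENNReal.ofReal c * kuratD dX A + kuratD dZ (g '' A) := by
  change _ ≤ ENNReal.ofReal c * sInf _ + sInf _
  rw [sInf_eq_iInf', sInf_eq_iInf', ENNReal.mul_iInf' (by simp) fun _ =>
    ⟨⊤, 1, fun _ => A, fun x hx => mem_iUnion.mpr ⟨0, hx⟩, fun _ _ _ _ _ => le_top⟩]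
  refine ENNReal.le_iInf_add_iInf ?_
  rintro ⟨ε, n, C, hAC, hC⟩ ⟨η, m, D, hgD, hD⟩
  refine kuratD_le_of_cover
    (fun ij : Fin n × Fin m => f '' {x ∈ A | x ∈ C ij.1 ∧ g x ∈ D ij.2}) ?_ ?_
  · rintro _ ⟨x, hx, rfl⟩
    obtain ⟨i, hi⟩ := mem_iUnion.mp (hAC hx)
    obtain ⟨j, hj⟩ := mem_iUnion.mp (hgD ⟨x, hx, rfl⟩)
    exact mem_iUnion.mpr ⟨(i, j), x, ⟨hx, hi, hj⟩, rfl⟩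
  · rintro ⟨i, j⟩ _ ⟨x, ⟨hx, hxC, hxD⟩, rfl⟩ _ ⟨y, ⟨hy, hyC, hyD⟩, rfl⟩
    calc ENNReal.ofReal (dY (f x) (f y))
        ≤ ENNReal.ofReal (c * dX x y) + ENNReal.ofReal (dZ (g x) (g y)) :=
          (ENNReal.ofReal_le_ofReal (h x hx y hy)).trans ENNReal.ofReal_add_le
      _ ≤ ENNReal.ofReal c * ε + η := by
          rw [ENNReal.ofReal_mul hc]
          gcongr
          exacts [hC i x hxC y hyC, hD j _ hxD _ hyD]

end Kuratowski

lemma kuratD_dCb_le_of_uniformEquicontinuous {F : Set (ℝ → ℝ)} (hF : F.UniformEquicontinuous)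
    {M : ℝ} (hM : ∀ f ∈ F, ∀ x, |f x| ≤ M) {δ : ℝ} (hδ : 0 < δ) :
    kuratD dCb F ≤ ENNReal.ofReal δ := by
  obtain ⟨η, hη, hFη⟩ := Metric.uniformEquicontinuous_iff.mp hF (δ / 8) (by positivity)
  obtain ⟨N, hN⟩ : ∃ N : ℕ, (1 / 2 : ℝ) ^ N * (2 * M) < δ / 2 :=
    (((tendsto_pow_atTop_nhds_zero_of_lt_one (by norm_num) (by norm_num)).mul_const
      (2 * M)).eventually (gt_mem_nhds (by simpa using half_pos hδ))).exists
  obtain ⟨P, hPfin, hP⟩ :=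
    Metric.totallyBounded_iff.mp (isCompact_Icc (a := -(N : ℝ)) (b := N)).totallyBounded η hη
  have : Fintype P := hPfin.fintype
  obtain ⟨Y, hYfin, hY⟩ := Metric.totallyBounded_iff.mp
    (isCompact_closedBall (0 : P → ℝ) M).totallyBounded (δ / 8) (by positivity)
  have : Finite Y := hYfin
  -- `f` is recorded by its values on the finite `η`-net `P` of `[-N, N]`, up to `δ / 8`
  refine kuratD_le_of_cover (fun y : Y => {f ∈ F | dist (fun p : P => f p) y < δ / 8}) ?_ ?_
  · intro f hf
    have hfP : (fun p : P => f p) ∈ closedBall 0 M := by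
      rw [mem_closedBall, dist_zero_right,
        pi_norm_le_iff_of_nonneg ((abs_nonneg _).trans (hM f hf 0))]
      exact fun p => hM f hf p
    obtain ⟨y, hy, hfy⟩ := mem_iUnion₂.mp (hY hfP)
    exact mem_iUnion.mpr ⟨⟨y, hy⟩, hf, hfy⟩
  · rintro y f ⟨hf, hfy⟩ g ⟨hg, hgy⟩
    have hloc : ∀ x ∈ Icc (-(N : ℝ)) N, |f x - g x| ≤ δ / 2 := by
      intro x hx
      obtain ⟨p, hp, hxp⟩ := mem_iUnion₂.mp (hP hx)
      have hfp := hFη x p hxp ⟨f, hf⟩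
      have hgp := hFη x p hxp ⟨g, hg⟩
      have hpp := (dist_le_pi_dist (fun p : P => f p) (fun p : P => g p) ⟨p, hp⟩).trans
        (dist_triangle_right _ _ (y : P → ℝ))
      simp only [Real.dist_eq] at hfp hgp hpp
      linarith [abs_sub_le (f x) (f p) (g x), abs_sub_le (f p) (g p) (g x),
        abs_sub_comm (g p) (g x)]
    have hglob (x : ℝ) : |f x - g x| ≤ 2 * M := by
      linarith [abs_sub (f x) (g x), hM f hf x, hM g hg x]
    exact ENNReal.ofReal_le_ofReal
      (by linarith [dCb_le_of_abs_sub_le_on_Icc N (by positivity) hloc hglob])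

lemma kuratD_dCb_eq_zero_of_uniformEquicontinuous {F : Set (ℝ → ℝ)}
    (hF : F.UniformEquicontinuous) {M : ℝ} (hM : ∀ f ∈ F, ∀ x, |f x| ≤ M) :
    kuratD dCb F = 0 :=
  le_antisymm (ENNReal.le_of_forall_pos_le_add fun δ hδ _ => by
    simpa using kuratD_dCb_le_of_uniformEquicontinuous hF hM (NNReal.coe_pos.mpr hδ)) bot_le

lemma dCb_Tmap_le {J : ℝ → ℝ} (hJ : IsProbabilityDensity J) {b : ℝ} {φ ψ : ℝ → ℝ}
    (hφ : Continuous φ) (hφb : ∀ x, |φ x| ≤ b) (hψ : Continuous ψ) (hψb : ∀ x, |ψ x| ≤ b)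
    (t : ℝ) :
    dCb (Tmap J t φ) (Tmap J t ψ) ≤
      Real.exp (-t) * dCb φ ψ + dCb (convPart J t φ) (convPart J t ψ) := by
  refine dCb_le_mul_add (Real.exp_pos _).le (M' := 2 * b)
    (M'' := 2 * (Real.exp (-t) * (Real.exp |t| - 1) * b)) (fun x => ?_) (fun x => ?_) fun x => ?_
  · linarith [abs_sub (φ x) (ψ x), hφb x, hψb x]
  · linarith [abs_sub (convPart J t φ x) (convPart J t ψ x),
      abs_convPart_le hJ hφ hφb t x, abs_convPart_le hJ hψ hψb t x]
  · rw [Tmap_eq_add_convPart hJ hφ hφb, Tmap_eq_add_convPart hJ hψ hψb, add_sub_add_comm,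
      ← mul_sub]
    exact (abs_add_le _ _).trans_eq (by rw [abs_mul, abs_of_pos (Real.exp_pos _)])

lemma uniformEquicontinuous_convPart_image {J : ℝ → ℝ} (hJ : IsProbabilityDensity J) {b : ℝ}
    {U : Set (ℝ → ℝ)} (hU : ∀ φ ∈ U, Continuous φ ∧ ∀ x, |φ x| ≤ b) (t : ℝ) :
    (convPart J t '' U).UniformEquicontinuous := by
  refine uniformEquicontinuous_of_translationModulus hJ.integrable
    (Real.exp (-t) * (Real.exp |t| - 1) * b) ?_
  rintro ⟨_, φ, hφ, rfl⟩ x x'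
  exact abs_convPart_sub_le hJ (hU φ hφ).1 (hU φ hφ).2 t x x'

theorem stmt_9_general (J : ℝ → ℝ) (hJ0 : ∀ y, 0 ≤ J y) (hJi : Integrable J)
    (hJ1 : ∫ y, J y = 1) (b : ℝ)
    (t : ℝ) (U : Set (ℝ → ℝ))
    (hU : ∀ φ ∈ U, Continuous φ ∧ ∀ x, φ x ∈ Set.Icc 0 b) :
    kuratD dCb ((fun φ => Tmap J t φ) '' U) ≤
      ENNReal.ofReal (Real.exp (-t)) * kuratD dCb U := by
  have hJ : IsProbabilityDensity J := ⟨hJ0, hJi, hJ1⟩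
  have hU' : ∀ φ ∈ U, Continuous φ ∧ ∀ x, |φ x| ≤ b := fun φ hφ =>
    ⟨(hU φ hφ).1, fun x => (abs_of_nonneg ((hU φ hφ).2 x).1).trans_le ((hU φ hφ).2 x).2⟩
  have hconv : kuratD dCb (convPart J t '' U) = 0 :=
    kuratD_dCb_eq_zero_of_uniformEquicontinuous (uniformEquicontinuous_convPart_image hJ hU' t)
      (M := Real.exp (-t) * (Real.exp |t| - 1) * b) (by
        rintro _ ⟨φ, hφ, rfl⟩ x
        exact abs_convPart_le hJ (hU' φ hφ).1 (hU' φ hφ).2 t x)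
  calc kuratD dCb ((fun φ => Tmap J t φ) '' U)
      ≤ ENNReal.ofReal (Real.exp (-t)) * kuratD dCb U + kuratD dCb (convPart J t '' U) :=
        kuratD_image_le_mul_add dCb dCb dCb _ _ (Real.exp_pos _).le fun φ hφ ψ hψ =>
          dCb_Tmap_le hJ (hU' φ hφ).1 (hU' φ hφ).2 (hU' ψ hψ).1 (hU' ψ hψ).2 t
    _ = ENNReal.ofReal (Real.exp (-t)) * kuratD dCb U := by rw [hconv, add_zero]

/-- Lemma 1: for each `t > 0` and every `U ⊆ C_b`,
`α(T(t)U) ≤ e^{−t} α(U)` with `α` the Kuratowski measure of noncompactness in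
`(C_b, d)`; i.e. `T(t)` is an `α`-contraction with coefficient `e^{−t}`. -/
theorem stmt_9 (J : ℝ → ℝ) (hJ0 : ∀ y, 0 ≤ J y) (hJi : Integrable J)
    (hJ1 : ∫ y, J y = 1) (b : ℝ) (hb : 0 < b)
    (t : ℝ) (ht : 0 < t) (U : Set (ℝ → ℝ))
    (hU : ∀ φ ∈ U, Continuous φ ∧ ∀ x, φ x ∈ Set.Icc 0 b) :
    kuratD dCb ((fun φ => Tmap J t φ) '' U) ≤
      ENNReal.ofReal (Real.exp (-t)) * kuratD dCb U :=
  stmt_9_general J hJ0 hJi hJ1 b t U hU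
end

section
/- (Lemma 3) Let a < b' be real numbers and X a Banach space. Let B ⊂ C([a,b'],X) be a bounded set that is equicontinuous on [a,b'], and define B(s) = {g(s) : g ∈ B} ⊆ X for s ∈ [a,b'] and ∫_a^{b'} B(s) ds = {∫_a^{b'} g(s) ds : g ∈ B} ⊆ X. Then α(∫_a^{b'} B(s) ds) ≤ ∫_a^{b'} α(B(s)) ds, where α denotes the Kuratowski measure of noncompactness (in X on both sides). -/
/-!
Cut the compact parameter space into finitely many measurable pieces `E i ∋ ξ i` on which, by
uniform equicontinuity, every `g ∈ B` oscillates by at most `ε`. Then `∫ g` lies within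
`ε μ(S)` of the Riemann sum `∑ μ(E i) • g (ξ i)`, and subadditivity and homogeneity of `α` bound
the noncompactness of the set of Riemann sums by `∑ μ(E i) α(B(ξ i))`. Since
`α(B(ξ i)) ≤ α(B(s)) + 2ε` for `s ∈ E i`, that sum is at most `∫ α(B(s)) ds + 2ε μ(S)`;
now let `ε → 0`.
-/

open MeasureTheory Real Set
open scoped ENNReal

/-- The Kuratowski measure of noncompactness: the infimum (in `ℝ≥0∞`, so `∞` if no
such cover exists) of all `ε` such that `A` admits a finite cover by sets of
diameter at most `ε`. -/
noncomputable def kurat {X : Type*} [PseudoEMetricSpace X] (A : Set X) : ℝ≥0∞ :=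
  sInf {ε : ℝ≥0∞ | ∃ (n : ℕ) (C : Fin n → Set X), A ⊆ ⋃ i, C i ∧
    ∀ i, EMetric.diam (C i) ≤ ε}

/-- Lebesgue measure on the subtype `[a,b'] ⊆ ℝ`. -/
noncomputable def iccVolume (a b' : ℝ) : Measure (Set.Icc a b') :=
  (volume : Measure ℝ).comap Subtype.val

open Function
open scoped NNReal Pointwise

section Kuratowski

variable {X : Type*}

lemma kurat_le_of_subset_iUnion [PseudoEMetricSpace X] {A : Set X} {n : ℕ} {C : Fin n → Set X}
    {ε : ℝ≥0∞} (hA : A ⊆ ⋃ i, C i) (hC : ∀ i, Metric.ediam (C i) ≤ ε) : kurat A ≤ ε :=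
  sInf_le ⟨n, C, hA, hC⟩

lemma kurat_mono [PseudoEMetricSpace X] {A A' : Set X} (h : A ⊆ A') : kurat A ≤ kurat A' :=
  sInf_le_sInf fun _ ⟨n, C, hA', hC⟩ => ⟨n, C, h.trans hA', hC⟩

lemma kurat_le_ediam [PseudoEMetricSpace X] (A : Set X) : kurat A ≤ Metric.ediam A :=
  kurat_le_of_subset_iUnion (C := fun _ : Fin 1 => A) (iUnion_const A).symm.subset fun _ => le_rfl

lemma kurat_le_add_two_mul_of_forall_exists_edist_le [PseudoEMetricSpace X] {A A' : Set X}
    {r : ℝ≥0∞} (h : ∀ x ∈ A, ∃ y ∈ A', edist x y ≤ r) : kurat A ≤ kurat A' + 2 * r := by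
  rw [kurat.eq_1 A', ENNReal.sInf_add]
  refine le_iInf₂ fun ε ⟨n, C, hA', hC⟩ => kurat_le_of_subset_iUnion
    (C := fun i => {x | ∃ y ∈ C i, edist x y ≤ r}) (fun x hx => ?_) fun i => Metric.ediam_le ?_
  · obtain ⟨y, hy, hxy⟩ := h x hx
    obtain ⟨i, hi⟩ := mem_iUnion.1 (hA' hy)
    exact mem_iUnion.2 ⟨i, y, hi, hxy⟩
  · rintro x ⟨y, hy, hxy⟩ x' ⟨y', hy', hxy'⟩
    calc edist x x' ≤ edist x y + edist y y' + edist y' x' := edist_triangle4 x y y' x'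
      _ ≤ r + ε + r := by
        gcongr
        · exact (Metric.edist_le_ediam_of_mem hy hy').trans (hC i)
        · rwa [edist_comm]
      _ = ε + 2 * r := by ring

lemma LipschitzWith.kurat_image_le [PseudoEMetricSpace X] {Y : Type*} [PseudoEMetricSpace Y]
    {K : ℝ≥0} {f : X → Y} (hf : LipschitzWith K f) (A : Set X) :
    kurat (f '' A) ≤ K * kurat A := by
  rcases eq_or_ne K 0 with rfl | hK
  · simpa using (kurat_le_ediam _).trans (hf.ediam_image_le A)
  rw [kurat.eq_1 A, sInf_eq_iInf', ENNReal.mul_iInf_of_ne (by simpa) ENNReal.coe_ne_top]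
  refine le_iInf fun ⟨ε, n, C, hA, hC⟩ => kurat_le_of_subset_iUnion (C := fun i => f '' C i)
    ((image_mono hA).trans (image_iUnion).subset) fun i => ?_
  exact (hf.ediam_image_le _).trans (by gcongr; exact hC i)

lemma kurat_add_le [SeminormedAddCommGroup X] (A A' : Set X) :
    kurat (A + A') ≤ kurat A + kurat A' := by
  rw [kurat.eq_1 A, ENNReal.sInf_add]
  refine le_iInf₂ fun ε ⟨n, C, hA, hC⟩ => ?_
  rw [kurat.eq_1 A', ENNReal.add_sInf]
  refine le_iInf₂ fun ε' ⟨m, C', hA', hC'⟩ => kurat_le_of_subset_iUnion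
    (C := fun k => C (finProdFinEquiv.symm k).1 + C' (finProdFinEquiv.symm k).2) ?_ fun k => ?_
  · rintro _ ⟨x, hx, y, hy, rfl⟩
    obtain ⟨i, hi⟩ := mem_iUnion.1 (hA hx)
    obtain ⟨j, hj⟩ := mem_iUnion.1 (hA' hy)
    exact mem_iUnion.2 ⟨finProdFinEquiv (i, j), by simpa using add_mem_add hi hj⟩
  · refine Metric.ediam_le ?_
    rintro _ ⟨x, hx, y, hy, rfl⟩ _ ⟨x', hx', y', hy', rfl⟩
    calc edist (x + y) (x' + y') ≤ edist x x' + edist y y' := edist_add_add_le x y x' y'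
      _ ≤ ε + ε' := add_le_add ((Metric.edist_le_ediam_of_mem hx hx').trans (hC _))
          ((Metric.edist_le_ediam_of_mem hy hy').trans (hC' _))

lemma kurat_image_sum_le [SeminormedAddCommGroup X] {ι κ : Type*} (s : Finset κ)
    (f : κ → ι → X) (B : Set ι) :
    kurat ((fun g => ∑ i ∈ s, f i g) '' B) ≤ ∑ i ∈ s, kurat (f i '' B) := by
  classical
  induction s using Finset.induction_on with
  | empty =>
    refine (kurat_mono (A' := {0}) ?_).trans ((kurat_le_ediam _).trans Metric.ediam_singleton.le)
    rintro _ ⟨g, -, rfl⟩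
    simp
  | insert k s hk ih =>
    rw [Finset.sum_insert hk]
    refine (kurat_mono ?_).trans ((kurat_add_le _ _).trans (add_le_add_right ih _))
    rintro _ ⟨g, hg, rfl⟩
    exact ⟨f k g, mem_image_of_mem _ hg, _, mem_image_of_mem _ hg,
      (Finset.sum_insert hk (f := fun i => f i g)).symm⟩

end Kuratowski

lemma exists_measurable_partition_subset_eball {S : Type*} [PseudoEMetricSpace S]
    [CompactSpace S] [MeasurableSpace S] [OpensMeasurableSpace S] {δ : ℝ≥0∞} (hδ : 0 < δ) :
    ∃ (n : ℕ) (E : Fin n → Set S) (ξ : Fin n → S), (∀ i, MeasurableSet (E i)) ∧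
      Pairwise (Disjoint on E) ∧ ⋃ i, E i = univ ∧ ∀ i, E i ⊆ Metric.eball (ξ i) δ := by
  obtain ⟨t, ht, hcover⟩ :=
    EMetric.totallyBounded_iff.1 (isCompact_univ : IsCompact (univ : Set S)).totallyBounded δ hδ
  obtain ⟨n, ξ, rfl⟩ := ht.fin_embedding
  refine ⟨n, disjointed fun i => Metric.eball (ξ i) δ, ξ, fun i => ?_, disjoint_disjointed _,
    ?_, fun i => disjointed_subset _ _⟩
  · rw [disjointed_eq_inter_compl]
    exact Metric.isOpen_eball.measurableSet.inter
      (.biInter (to_countable _) fun _ _ => Metric.isOpen_eball.measurableSet.compl)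
  · rw [iUnion_disjointed]
    simpa [univ_subset_iff] using hcover

section Partition

variable {S : Type*} [MeasurableSpace S] {μ : Measure S} {ι : Type*} [Fintype ι]
  {E : ι → Set S}

lemma norm_integral_sub_sum_smul_le [IsFiniteMeasure μ] {X : Type*} [NormedAddCommGroup X]
    [NormedSpace ℝ X] [CompleteSpace X] (hE : ∀ i, MeasurableSet (E i))
    (hdisj : Pairwise (Disjoint on E)) (hcover : ⋃ i, E i = univ) {f : S → X}
    (hf : Integrable f μ) {v : ι → X} {C : ℝ}
    (hfv : ∀ i, ∀ s ∈ E i, ‖f s - v i‖ ≤ C) :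
    ‖∫ s, f s ∂μ - ∑ i, μ.real (E i) • v i‖ ≤ C * μ.real univ := by
  have hsplit : ∫ s, f s ∂μ = ∑ i, ∫ s in E i, f s ∂μ := by
    rw [← setIntegral_univ, ← hcover, integral_iUnion_fintype hE hdisj fun i => hf.integrableOn]
  calc ‖∫ s, f s ∂μ - ∑ i, μ.real (E i) • v i‖ = ‖∑ i, ∫ s in E i, (f s - v i) ∂μ‖ := by
        rw [hsplit, ← Finset.sum_sub_distrib]
        refine congrArg norm (Finset.sum_congr rfl fun i _ => ?_)
        rw [integral_sub hf.integrableOn (integrable_const _), setIntegral_const]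
    _ ≤ ∑ i, ‖∫ s in E i, (f s - v i) ∂μ‖ := norm_sum_le _ _
    _ ≤ ∑ i, C * μ.real (E i) := Finset.sum_le_sum fun i _ =>
        norm_setIntegral_le_of_norm_le_const (measure_lt_top _ _) (hfv i)
    _ = C * μ.real univ := by rw [← Finset.mul_sum, ← measureReal_iUnion_fintype hdisj hE, hcover]

lemma sum_measure_mul_le_lintegral_add_mul (hE : ∀ i, MeasurableSet (E i))
    (hdisj : Pairwise (Disjoint on E)) (hcover : ⋃ i, E i = univ) {f : S → ℝ≥0∞}
    {c : ι → ℝ≥0∞} {r : ℝ≥0∞} (hcf : ∀ i, ∀ s ∈ E i, c i ≤ f s + r) :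
    ∑ i, μ (E i) * c i ≤ ∫⁻ s, f s ∂μ + r * μ univ := by
  calc ∑ i, μ (E i) * c i = ∑ i, ∫⁻ _ in E i, c i ∂μ := by simp [mul_comm]
    _ ≤ ∑ i, ∫⁻ s in E i, (f s + r) ∂μ := Finset.sum_le_sum fun i _ =>
        lintegral_mono_ae ((ae_restrict_iff' (hE i)).2 (.of_forall (hcf i)))
    _ = ∫⁻ s, (f s + r) ∂μ := by
        rw [← setLIntegral_univ, ← hcover, lintegral_iUnion hE hdisj, tsum_fintype]
    _ = ∫⁻ s, f s ∂μ + r * μ univ := by rw [lintegral_add_right _ measurable_const, lintegral_const]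

end Partition

section Integral

variable {S X : Type*} [PseudoEMetricSpace S] [CompactSpace S] [MeasurableSpace S]
  [OpensMeasurableSpace S] [NormedAddCommGroup X] [NormedSpace ℝ X] [CompleteSpace X]
  (μ : Measure S) [IsFiniteMeasure μ] {B : Set C(S, X)}

lemma kurat_setOf_integral_le_lintegral_add {ε : ℝ≥0} {δ : ℝ≥0∞} (hδ : 0 < δ)
    (hB : ∀ s s', edist s s' < δ → ∀ g ∈ B, edist (g s) (g s') ≤ ε) :
    kurat {v : X | ∃ g ∈ B, v = ∫ s, g s ∂μ} ≤
      ∫⁻ s, kurat ((fun g : C(S, X) => g s) '' B) ∂μ + 4 * ε * μ univ := by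
  obtain ⟨n, E, ξ, hE, hdisj, hcover, hball⟩ := exists_measurable_partition_subset_eball (S := S) hδ
  have hosc : ∀ i, ∀ s ∈ E i, ∀ g ∈ B, edist (g s) (g (ξ i)) ≤ ε := fun i s hs =>
    hB s (ξ i) (Metric.mem_eball.1 (hball i hs))
  have hriemann : ∀ g ∈ B, edist (∫ s, g s ∂μ) (∑ i, μ.real (E i) • g (ξ i)) ≤ ε * μ univ := by
    intro g hg
    rw [← ofReal_measureReal, ← ENNReal.ofReal_coe_nnreal, ← ENNReal.ofReal_mul ε.coe_nonneg,
      edist_dist, dist_eq_norm]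
    refine ENNReal.ofReal_le_ofReal (norm_integral_sub_sum_smul_le hE hdisj hcover
      (g.continuous.integrable_of_hasCompactSupport (.of_compactSpace _)) fun i s hs => ?_)
    rw [← dist_eq_norm, ← edist_le_ofReal ε.coe_nonneg, ENNReal.ofReal_coe_nnreal]
    exact hosc i s hs g hg
  have hsum : kurat ((fun g : C(S, X) => ∑ i, μ.real (E i) • g (ξ i)) '' B) ≤
      ∑ i, μ (E i) * kurat ((fun g : C(S, X) => g (ξ i)) '' B) := by
    refine (kurat_image_sum_le _ _ B).trans (Finset.sum_le_sum fun i _ => ?_)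
    rw [← image_image (μ.real (E i) • ·) (fun g : C(S, X) => g (ξ i)), ← ofReal_measureReal,
      ← Real.enorm_of_nonneg measureReal_nonneg]
    exact (lipschitzWith_smul _).kurat_image_le _
  calc kurat {v : X | ∃ g ∈ B, v = ∫ s, g s ∂μ}
      ≤ kurat ((fun g : C(S, X) => ∑ i, μ.real (E i) • g (ξ i)) '' B) + 2 * (ε * μ univ) :=
        kurat_le_add_two_mul_of_forall_exists_edist_le fun _ ⟨g, hg, hv⟩ =>
          ⟨_, mem_image_of_mem _ hg, hv ▸ hriemann g hg⟩
    _ ≤ ∫⁻ s, kurat ((fun g : C(S, X) => g s) '' B) ∂μ + 2 * ε * μ univ + 2 * (ε * μ univ) := by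
        refine add_le_add_left (hsum.trans (sum_measure_mul_le_lintegral_add_mul hE hdisj hcover
          fun i s hs => ?_)) _
        refine kurat_le_add_two_mul_of_forall_exists_edist_le ?_
        rintro _ ⟨g, hg, rfl⟩
        exact ⟨g s, mem_image_of_mem _ hg, edist_comm (g s) (g (ξ i)) ▸ hosc i s hs g hg⟩
    _ = ∫⁻ s, kurat ((fun g : C(S, X) => g s) '' B) ∂μ + 4 * ε * μ univ := by ring

theorem kurat_setOf_integral_le (hB : UniformEquicontinuous fun g : B => ⇑(g : C(S, X))) :
    kurat {v : X | ∃ g ∈ B, v = ∫ s, g s ∂μ} ≤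
      ∫⁻ s, kurat ((fun g : C(S, X) => g s) '' B) ∂μ := by
  refine ENNReal.le_of_forall_pos_le_add fun η hη _ => ?_
  obtain ⟨ε, hε, hεη⟩ := ENNReal.exists_nnreal_pos_mul_lt (a := 4 * μ univ) (b := η) (by finiteness)
    (by simpa using hη.ne')
  obtain ⟨δ, hδ, hδB⟩ := (uniformity_basis_edist.uniformEquicontinuous_iff
    uniformity_basis_edist).1 hB ε (by simpa using hε)
  calc kurat {v : X | ∃ g ∈ B, v = ∫ s, g s ∂μ}
      ≤ ∫⁻ s, kurat ((fun g : C(S, X) => g s) '' B) ∂μ + 4 * ε * μ univ :=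
        kurat_setOf_integral_le_lintegral_add μ hδ fun s s' hss' g hg => (hδB s s' hss' ⟨g, hg⟩).le
    _ ≤ ∫⁻ s, kurat ((fun g : C(S, X) => g s) '' B) ∂μ + η := by
        rw [show (4 : ℝ≥0∞) * ε * μ univ = ε * (4 * μ univ) by ring]
        exact add_le_add_right hεη.le _

end Integral

instance (a b' : ℝ) : IsFiniteMeasure (iccVolume a b') := by
  refine ⟨?_⟩
  rw [iccVolume, (MeasurableEmbedding.subtype_coe measurableSet_Icc).comap_apply, image_univ,
    Subtype.range_coe]
  exact measure_Icc_lt_top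

theorem stmt_11_general {X : Type*} [NormedAddCommGroup X] [NormedSpace ℝ X] [CompleteSpace X]
    (a b' : ℝ) (B : Set C(Set.Icc a b', X))
    (heq : ∀ ε > (0 : ℝ), ∃ δ > (0 : ℝ), ∀ s s' : Set.Icc a b',
      |(s : ℝ) - (s' : ℝ)| < δ → ∀ g ∈ B, ‖g s - g s'‖ < ε) :
    kurat {v : X | ∃ g ∈ B, v = ∫ s, g s ∂(iccVolume a b')} ≤
      ∫⁻ s, kurat ((fun g : C(Set.Icc a b', X) => g s) '' B) ∂(iccVolume a b') := by
  refine kurat_setOf_integral_le _ (Metric.uniformEquicontinuous_iff.2 fun ε hε => ?_)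
  obtain ⟨δ, hδ, hB⟩ := heq ε hε
  exact ⟨δ, hδ, fun s s' hss' g => by
    simpa [dist_eq_norm] using hB s s' (by rwa [Subtype.dist_eq, Real.dist_eq] at hss') g g.2⟩

/-- Lemma 3: for `a < b'`, a Banach space `X`, and a bounded
equicontinuous set `B ⊆ C([a,b'], X)`,
`α(∫_a^{b'} B(s) ds) ≤ ∫_a^{b'} α(B(s)) ds`. -/
theorem stmt_11 {X : Type*} [NormedAddCommGroup X] [NormedSpace ℝ X] [CompleteSpace X]
    (a b' : ℝ) (hab : a < b') (B : Set C(Set.Icc a b', X))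
    (hbd : Bornology.IsBounded B)
    (heq : ∀ ε > (0 : ℝ), ∃ δ > (0 : ℝ), ∀ s s' : Set.Icc a b',
      |(s : ℝ) - (s' : ℝ)| < δ → ∀ g ∈ B, ‖g s - g s'‖ < ε) :
    kurat {v : X | ∃ g ∈ B, v = ∫ s, g s ∂(iccVolume a b')} ≤
      ∫⁻ s, kurat ((fun g : C(Set.Icc a b', X) => g s) '' B) ∂(iccVolume a b') :=
  stmt_11_general a b' B heq
end
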